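/- Suppose Γ_L is a subgroup of the group (ℝ^q × ℝ^m, ∘), and suppose there exist constants C₀ > 0, γ₁ > 0 and γ₂ ≥ 0 such that the relative discrepancy satisfies P(R) ≤ C₀ · R^{−γ₁} (log R)^{γ₂} for every R ≥ 8. Then there exists a constant C > 0 (depending only on q, m, α, M, L, C₀, γ₁, γ₂) such that for every T > 0, every δ ∈ (0,1) and every R ≥ 10, one has T^{−Q} · #{((x,t),(x',t')) ∈ Γ_L(T) × Γ_L(T) : |N_{α,M}((x,t)^{−1}∘(x',t')) − R| ≤ δ} ≤ C · max{R^{Q−1}δ, R^{Q−γ₁}(log R)^{γ₂}}, where Γ_L(T) = {(k',k'') ∈ Γ_L : |k'| ≤ T and |k''| ≤ T²}. -/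
import Mathlib

open MeasureTheory Matrix
open scoped ENNReal

/-- Euclidean norm of a vector in `Fin n → ℝ`. -/
noncomputable def eNorm {n : ℕ} (v : Fin n → ℝ) : ℝ := Real.sqrt (∑ i, v i ^ 2)

/-- The homogeneous norm `N_{α,M}(x,t) = (|M₁x|^α + |M₂t|^{α/2})^{1/α}`. -/
noncomputable def homNorm {q m : ℕ} (α : ℝ) (M₁ : Matrix (Fin q) (Fin q) ℝ)
    (M₂ : Matrix (Fin m) (Fin m) ℝ) (p : (Fin q → ℝ) × (Fin m → ℝ)) : ℝ :=
  (eNorm (M₁.mulVec p.1) ^ α + eNorm (M₂.mulVec p.2) ^ (α / 2)) ^ (1 / α)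

/-- The ball `B_R^{α,M}`. -/
noncomputable def homBall {q m : ℕ} (α : ℝ) (M₁ : Matrix (Fin q) (Fin q) ℝ)
    (M₂ : Matrix (Fin m) (Fin m) ℝ) (R : ℝ) : Set ((Fin q → ℝ) × (Fin m → ℝ)) :=
  {p | homNorm α M₁ M₂ p ≤ R}

/-- The lattice point `(L₁ k', L₂ k'')`. -/
noncomputable def latticePoint {q m : ℕ} (L₁ : Matrix (Fin q) (Fin q) ℝ)
    (L₂ : Matrix (Fin m) (Fin m) ℝ) (k : (Fin q → ℤ) × (Fin m → ℤ)) :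
    (Fin q → ℝ) × (Fin m → ℝ) :=
  (L₁.mulVec (fun i => (k.1 i : ℝ)), L₂.mulVec (fun i => (k.2 i : ℝ)))

/-- `#(Γ_L ∩ B_R^{α,M})`. -/
noncomputable def latticeCount {q m : ℕ} (α : ℝ) (M₁ : Matrix (Fin q) (Fin q) ℝ)
    (M₂ : Matrix (Fin m) (Fin m) ℝ) (L₁ : Matrix (Fin q) (Fin q) ℝ)
    (L₂ : Matrix (Fin m) (Fin m) ℝ) (R : ℝ) : ℕ :=
  Nat.card {k : (Fin q → ℤ) × (Fin m → ℤ) // latticePoint L₁ L₂ k ∈ homBall α M₁ M₂ R}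

/-- The relative discrepancy `P(R)`. -/
noncomputable def discrepancy {q m : ℕ} (α : ℝ) (M₁ : Matrix (Fin q) (Fin q) ℝ)
    (M₂ : Matrix (Fin m) (Fin m) ℝ) (L₁ : Matrix (Fin q) (Fin q) ℝ)
    (L₂ : Matrix (Fin m) (Fin m) ℝ) (R : ℝ) : ℝ :=
  |L₁.det * L₂.det| / ((volume (homBall α M₁ M₂ 1)).toReal * R ^ (q + 2 * m)) *
    abs ((latticeCount α M₁ M₂ L₁ L₂ R : ℝ) -
      (volume (homBall α M₁ M₂ 1)).toReal * R ^ (q + 2 * m) / |L₁.det * L₂.det|)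

/-- The step-two group law `(x,t)∘(x',t')`. -/
noncomputable def grpMul {q m : ℕ} (U : Fin m → Matrix (Fin q) (Fin q) ℝ)
    (p p' : (Fin q → ℝ) × (Fin m → ℝ)) : (Fin q → ℝ) × (Fin m → ℝ) :=
  (p.1 + p'.1, fun j => p.2 j + p'.2 j + (1/2) * ((U j).mulVec p.1 ⬝ᵥ p'.1))

/-- The group inverse `(x,t)⁻¹`. -/
noncomputable def grpInv {q m : ℕ} (U : Fin m → Matrix (Fin q) (Fin q) ℝ)
    (p : (Fin q → ℝ) × (Fin m → ℝ)) : (Fin q → ℝ) × (Fin m → ℝ) :=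
  (-p.1, fun j => -p.2 j + (1/2) * ((U j).mulVec p.1 ⬝ᵥ p.1))

/-- The lattice `Γ_L` as a set of points. -/
noncomputable def latticeSet {q m : ℕ} (L₁ : Matrix (Fin q) (Fin q) ℝ)
    (L₂ : Matrix (Fin m) (Fin m) ℝ) : Set ((Fin q → ℝ) × (Fin m → ℝ)) :=
  Set.range (latticePoint L₁ L₂)

/-! ### Auxiliary lemmas -/

lemma eNorm_nonneg' {n : ℕ} (v : Fin n → ℝ) : 0 ≤ eNorm v := Real.sqrt_nonneg _

lemma abs_le_eNorm' {n : ℕ} (v : Fin n → ℝ) (i : Fin n) : |v i| ≤ eNorm v := by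
  rw [← Real.sqrt_sq_eq_abs]
  exact Real.sqrt_le_sqrt (Finset.single_le_sum (f := fun j => v j ^ 2)
    (fun j _ => sq_nonneg _) (Finset.mem_univ i))

noncomputable def frob {a b : ℕ} (A : Matrix (Fin a) (Fin b) ℝ) : ℝ :=
  Real.sqrt (∑ i, ∑ j, A i j ^ 2)

lemma frob_nonneg' {a b : ℕ} (A : Matrix (Fin a) (Fin b) ℝ) : 0 ≤ frob A := Real.sqrt_nonneg _

lemma eNorm_mulVec_le' {n : ℕ} (A : Matrix (Fin n) (Fin n) ℝ) (v : Fin n → ℝ) :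
    eNorm (A.mulVec v) ≤ frob A * eNorm v := by
  have h : ∀ i, (A.mulVec v i) ^ 2 ≤ (∑ j, A i j ^ 2) * (∑ j, v j ^ 2) := fun i =>
    Finset.sum_mul_sq_le_sq_mul_sq Finset.univ (fun j => A i j) v
  have h2 : ∑ i, (A.mulVec v i) ^ 2 ≤ (∑ i, ∑ j, A i j ^ 2) * (∑ j, v j ^ 2) := by
    rw [Finset.sum_mul]
    exact Finset.sum_le_sum fun i _ => h i
  calc eNorm (A.mulVec v) = Real.sqrt (∑ i, (A.mulVec v i) ^ 2) := rfl
    _ ≤ Real.sqrt ((∑ i, ∑ j, A i j ^ 2) * (∑ j, v j ^ 2)) := Real.sqrt_le_sqrt h2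
    _ = frob A * eNorm v := by
        rw [Real.sqrt_mul (by positivity)]; rfl

lemma eNorm_le_frobInv' {n : ℕ} {M : Matrix (Fin n) (Fin n) ℝ} (hM : IsUnit M.det)
    (v : Fin n → ℝ) : eNorm v ≤ frob M⁻¹ * eNorm (M.mulVec v) := by
  have h : M⁻¹.mulVec (M.mulVec v) = v := by
    rw [Matrix.mulVec_mulVec, Matrix.nonsing_inv_mul _ hM, Matrix.one_mulVec]
  calc eNorm v = eNorm (M⁻¹.mulVec (M.mulVec v)) := by rw [h]
    _ ≤ frob M⁻¹ * eNorm (M.mulVec v) := eNorm_mulVec_le' _ _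

lemma pi_norm_le_eNorm' {n : ℕ} (v : Fin n → ℝ) : ‖v‖ ≤ eNorm v := by
  rcases n with _ | n
  · have hv : v = 0 := Subsingleton.elim v 0
    rw [hv, norm_zero]
    exact eNorm_nonneg' _
  · apply pi_norm_le_iff_of_nonneg (eNorm_nonneg' v) |>.mpr
    intro i
    exact abs_le_eNorm' v i

lemma abs_dotProduct_le' {n : ℕ} (u v : Fin n → ℝ) : |u ⬝ᵥ v| ≤ eNorm u * eNorm v := by
  have h : (u ⬝ᵥ v) ^ 2 ≤ (∑ i, u i ^ 2) * (∑ i, v i ^ 2) :=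
    Finset.sum_mul_sq_le_sq_mul_sq Finset.univ u v
  have := Real.sqrt_le_sqrt h
  rwa [Real.sqrt_sq_eq_abs, Real.sqrt_mul (by positivity)] at this

lemma eNorm_add_le' {n : ℕ} (u v : Fin n → ℝ) : eNorm (u + v) ≤ eNorm u + eNorm v := by
  have hd : u ⬝ᵥ v ≤ eNorm u * eNorm v := (le_abs_self _).trans (abs_dotProduct_le' u v)
  have hexp : ∑ i, (u + v) i ^ 2 = (∑ i, u i ^ 2) + 2 * (u ⬝ᵥ v) + ∑ i, v i ^ 2 := by
    simp only [Pi.add_apply, dotProduct]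
    rw [Finset.mul_sum, ← Finset.sum_add_distrib, ← Finset.sum_add_distrib]
    apply Finset.sum_congr rfl
    intro i _; ring
  have h2 : ∑ i, (u + v) i ^ 2 ≤ (eNorm u + eNorm v) ^ 2 := by
    rw [hexp]
    have h3 : ∑ i, u i ^ 2 = eNorm u ^ 2 := (Real.sq_sqrt (by positivity)).symm
    have h4 : ∑ i, v i ^ 2 = eNorm v ^ 2 := (Real.sq_sqrt (by positivity)).symm
    rw [h3, h4]; nlinarith
  calc eNorm (u + v) = Real.sqrt (∑ i, (u + v) i ^ 2) := rfl
    _ ≤ Real.sqrt ((eNorm u + eNorm v) ^ 2) := Real.sqrt_le_sqrt h2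
    _ = eNorm u + eNorm v := Real.sqrt_sq (add_nonneg (eNorm_nonneg' u) (eNorm_nonneg' v))

lemma eNorm_neg' {n : ℕ} (v : Fin n → ℝ) : eNorm (-v) = eNorm v := by
  unfold eNorm
  congr 1
  apply Finset.sum_congr rfl
  intro i _
  simp [neg_sq]

lemma eNorm_le_sqrt_card' {n : ℕ} (v : Fin n → ℝ) {B : ℝ} (hB : 0 ≤ B)
    (h : ∀ i, |v i| ≤ B) : eNorm v ≤ Real.sqrt n * B := by
  have h2 : ∑ i, v i ^ 2 ≤ n * B ^ 2 := by
    calc ∑ i, v i ^ 2 ≤ ∑ _i : Fin n, B ^ 2 := by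
          apply Finset.sum_le_sum
          intro i _
          calc v i ^ 2 = |v i| ^ 2 := (sq_abs _).symm
            _ ≤ B ^ 2 := by nlinarith [h i, abs_nonneg (v i)]
      _ = n * B ^ 2 := by simp [mul_comm]
  calc eNorm v ≤ Real.sqrt (n * B ^ 2) := Real.sqrt_le_sqrt h2
    _ = Real.sqrt n * B := by
        rw [Real.sqrt_mul (Nat.cast_nonneg n), Real.sqrt_sq hB]

section hom
variable {q m : ℕ} {α : ℝ} {M₁ : Matrix (Fin q) (Fin q) ℝ} {M₂ : Matrix (Fin m) (Fin m) ℝ}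

lemma homNorm_nonneg' (p) : 0 ≤ homNorm α M₁ M₂ p :=
  Real.rpow_nonneg (add_nonneg (Real.rpow_nonneg (eNorm_nonneg' _) _)
    (Real.rpow_nonneg (eNorm_nonneg' _) _)) _

lemma homNorm_le_bounds' (hα : 0 < α) {p : (Fin q → ℝ) × (Fin m → ℝ)} {R : ℝ} (hR : 0 ≤ R)
    (hp : homNorm α M₁ M₂ p ≤ R) :
    eNorm (M₁.mulVec p.1) ≤ R ∧ eNorm (M₂.mulVec p.2) ≤ R ^ 2 := by
  set a := eNorm (M₁.mulVec p.1) with ha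
  set b := eNorm (M₂.mulVec p.2) with hb
  have ha0 : 0 ≤ a := eNorm_nonneg' _
  have hb0 : 0 ≤ b := eNorm_nonneg' _
  have hs0 : 0 ≤ a ^ α + b ^ (α / 2) := by positivity
  have hs : a ^ α + b ^ (α / 2) ≤ R ^ α := by
    have := Real.rpow_le_rpow (Real.rpow_nonneg hs0 _) hp hα.le
    rwa [← Real.rpow_mul hs0, one_div_mul_cancel hα.ne', Real.rpow_one] at this
  constructor
  · have h1 : a ^ α ≤ R ^ α := le_trans (le_add_of_nonneg_right (by positivity)) hs
    exact (Real.rpow_le_rpow_iff ha0 hR hα).mp h1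
  · have h1 : b ^ (α / 2) ≤ (R ^ 2) ^ (α / 2) := by
      have : (R ^ 2 : ℝ) ^ (α / 2) = R ^ α := by
        rw [← Real.rpow_natCast R 2, ← Real.rpow_mul hR]
        congr 1; ring
      rw [this]
      exact le_trans (le_add_of_nonneg_left (by positivity)) hs
    exact (Real.rpow_le_rpow_iff hb0 (by positivity) (by positivity)).mp h1

lemma homNorm_le_of_le' (hα : 0 < α) {p : (Fin q → ℝ) × (Fin m → ℝ)} {A : ℝ} (hA : 0 ≤ A)
    (h1 : eNorm (M₁.mulVec p.1) ≤ A) (h2 : eNorm (M₂.mulVec p.2) ≤ A ^ 2) :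
    homNorm α M₁ M₂ p ≤ (2 : ℝ) ^ (1 / α) * A := by
  have ha0 : 0 ≤ eNorm (M₁.mulVec p.1) := eNorm_nonneg' _
  have hb0 : 0 ≤ eNorm (M₂.mulVec p.2) := eNorm_nonneg' _
  have e1 : eNorm (M₁.mulVec p.1) ^ α ≤ A ^ α := Real.rpow_le_rpow ha0 h1 hα.le
  have e2 : eNorm (M₂.mulVec p.2) ^ (α / 2) ≤ A ^ α := by
    have : (A ^ 2 : ℝ) ^ (α / 2) = A ^ α := by
      rw [← Real.rpow_natCast A 2, ← Real.rpow_mul hA]; congr 1; ring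
    rw [← this]
    exact Real.rpow_le_rpow hb0 h2 (by positivity)
  calc homNorm α M₁ M₂ p ≤ (2 * A ^ α) ^ (1 / α) := by
        apply Real.rpow_le_rpow (by positivity) _ (by positivity)
        calc _ ≤ A ^ α + A ^ α := add_le_add e1 e2
          _ = 2 * A ^ α := by ring
    _ = (2 : ℝ) ^ (1 / α) * A := by
        rw [Real.mul_rpow (by norm_num) (Real.rpow_nonneg hA _), ← Real.rpow_mul hA,
          mul_one_div_cancel hα.ne', Real.rpow_one]

lemma continuous_eNorm' {n : ℕ} : Continuous (eNorm (n := n)) :=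
  Real.continuous_sqrt.comp (continuous_finset_sum _ fun i _ => (continuous_apply i).pow 2)

lemma continuous_mulVec' {n : ℕ} (A : Matrix (Fin n) (Fin n) ℝ) :
    Continuous fun v : Fin n → ℝ => A.mulVec v := by
  apply continuous_pi
  intro i
  simp only [Matrix.mulVec, dotProduct]
  exact continuous_finset_sum _ fun j _ => continuous_const.mul (continuous_apply j)

lemma continuous_rpow_const' {c : ℝ} (hc : 0 < c) : Continuous fun y : ℝ => y ^ c :=
  continuous_iff_continuousAt.mpr fun x => Real.continuousAt_rpow_const x c (Or.inr hc.le)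

lemma continuous_homNorm' (hα : 0 < α) (M₁ : Matrix (Fin q) (Fin q) ℝ)
    (M₂ : Matrix (Fin m) (Fin m) ℝ) : Continuous (homNorm α M₁ M₂) := by
  apply (continuous_rpow_const' (by positivity)).comp
  apply Continuous.add
  · exact (continuous_rpow_const' hα).comp
      (continuous_eNorm'.comp ((continuous_mulVec' M₁).comp continuous_fst))
  · exact (continuous_rpow_const' (by positivity)).comp
      (continuous_eNorm'.comp ((continuous_mulVec' M₂).comp continuous_snd))

lemma homNorm_zero' (hα : 0 < α) (M₁ : Matrix (Fin q) (Fin q) ℝ)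
    (M₂ : Matrix (Fin m) (Fin m) ℝ) : homNorm α M₁ M₂ 0 = 0 := by
  have h : eNorm (0 : Fin q → ℝ) = 0 := by simp [eNorm]
  have h2 : eNorm (0 : Fin m → ℝ) = 0 := by simp [eNorm]
  simp only [homNorm, Prod.fst_zero, Prod.snd_zero, Matrix.mulVec_zero]
  rw [h, h2, Real.zero_rpow hα.ne', Real.zero_rpow (by positivity : (0:ℝ) < α/2).ne',
    add_zero, Real.zero_rpow (by positivity : (0:ℝ) < 1/α).ne']

lemma homBall_volume_pos' (hα : 0 < α) (M₁ : Matrix (Fin q) (Fin q) ℝ)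
    (M₂ : Matrix (Fin m) (Fin m) ℝ) : 0 < volume (homBall α M₁ M₂ 1) := by
  have hopen : IsOpen {p : (Fin q → ℝ) × (Fin m → ℝ) | homNorm α M₁ M₂ p < 1} :=
    isOpen_lt (continuous_homNorm' hα M₁ M₂) continuous_const
  have hmem : ((0 : Fin q → ℝ), (0 : Fin m → ℝ)) ∈
      {p : (Fin q → ℝ) × (Fin m → ℝ) | homNorm α M₁ M₂ p < 1} := by
    show homNorm α M₁ M₂ _ < 1
    rw [show ((0 : Fin q → ℝ), (0 : Fin m → ℝ)) = (0 : (Fin q → ℝ) × (Fin m → ℝ)) from rfl,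
      homNorm_zero' hα M₁ M₂]
    norm_num
  calc (0 : ℝ≥0∞) < volume {p : (Fin q → ℝ) × (Fin m → ℝ) | homNorm α M₁ M₂ p < 1} :=
        hopen.measure_pos volume ⟨_, hmem⟩
    _ ≤ volume (homBall α M₁ M₂ 1) := measure_mono fun p hp => le_of_lt (Set.mem_setOf_eq ▸ hp)

lemma homBall_volume_ne_top' (hα : 0 < α) (hM₁ : IsUnit M₁.det) (hM₂ : IsUnit M₂.det) :
    volume (homBall α M₁ M₂ 1) ≠ ⊤ := by
  set c := max (frob M₁⁻¹) (frob M₂⁻¹) with hc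
  have hsub : homBall α M₁ M₂ 1 ⊆ Metric.closedBall 0 c := by
    intro p hp
    obtain ⟨h1, h2⟩ := homNorm_le_bounds' hα zero_le_one hp
    rw [Metric.mem_closedBall, dist_zero_right, Prod.norm_def]
    apply max_le
    · calc ‖p.1‖ ≤ eNorm p.1 := pi_norm_le_eNorm' _
        _ ≤ frob M₁⁻¹ * eNorm (M₁.mulVec p.1) := eNorm_le_frobInv' hM₁ _
        _ ≤ frob M₁⁻¹ * 1 := mul_le_mul_of_nonneg_left h1 (frob_nonneg' _)
        _ ≤ c := by rw [mul_one]; exact le_max_left _ _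
    · calc ‖p.2‖ ≤ eNorm p.2 := pi_norm_le_eNorm' _
        _ ≤ frob M₂⁻¹ * eNorm (M₂.mulVec p.2) := eNorm_le_frobInv' hM₂ _
        _ ≤ frob M₂⁻¹ * 1 := by
            apply mul_le_mul_of_nonneg_left _ (frob_nonneg' _)
            calc eNorm (M₂.mulVec p.2) ≤ (1:ℝ)^2 := h2
              _ = 1 := one_pow 2
        _ ≤ c := by rw [mul_one]; exact le_max_right _ _
  exact ne_top_of_le_ne_top (measure_closedBall_lt_top).ne (measure_mono hsub)

end hom

lemma finite_int_vec' {n : ℕ} (K : ℝ) :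
    {k : Fin n → ℤ | eNorm (fun i => (k i : ℝ)) ≤ K}.Finite := by
  apply Set.Finite.subset (Set.Finite.pi (fun i : Fin n => Set.finite_Icc (-⌈K⌉) ⌈K⌉))
  intro k hk
  simp only [Set.mem_pi, Set.mem_univ, Set.mem_Icc, forall_true_left]
  intro i
  have h1 : |(k i : ℝ)| ≤ K := (abs_le_eNorm' (fun i => (k i : ℝ)) i).trans hk
  have h2 : ((|k i| : ℤ) : ℝ) ≤ (⌈K⌉ : ℝ) := by
    rw [Int.cast_abs]; exact h1.trans (Int.le_ceil K)
  have h3 : |k i| ≤ ⌈K⌉ := by exact_mod_cast h2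
  exact abs_le.mp h3

lemma grp_cancel' {q m : ℕ} (U : Fin m → Matrix (Fin q) (Fin q) ℝ)
    (p p' : (Fin q → ℝ) × (Fin m → ℝ)) :
    grpMul U p (grpMul U (grpInv U p) p') = p' := by
  unfold grpMul grpInv
  apply Prod.ext
  · simp only []
    funext i
    simp only [Pi.add_apply, Pi.neg_apply]
    ring
  · funext j
    simp only [Matrix.mulVec_neg, neg_dotProduct, dotProduct_add,
      dotProduct_neg, Pi.add_apply, Pi.neg_apply]
    ring

lemma pow_sub_pow_le' {n : ℕ} {a b : ℝ} (hb : 0 ≤ b) (hba : b ≤ a) :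
    a ^ n - b ^ n ≤ n * a ^ (n - 1) * (a - b) := by
  have ha : 0 ≤ a := hb.trans hba
  rw [← geom_sum₂_mul a b n]
  apply mul_le_mul_of_nonneg_right _ (by linarith)
  calc (∑ i ∈ Finset.range n, a ^ i * b ^ (n - 1 - i))
      ≤ ∑ _i ∈ Finset.range n, a ^ (n - 1) := by
        apply Finset.sum_le_sum
        intro i hi
        calc a ^ i * b ^ (n - 1 - i) ≤ a ^ i * a ^ (n - 1 - i) := by
              apply mul_le_mul_of_nonneg_left (pow_le_pow_left₀ hb hba _) (pow_nonneg ha i)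
          _ = a ^ (n - 1) := by
              rw [← pow_add]
              congr 1
              have := Finset.mem_range.mp hi
              omega
    _ = n * a ^ (n - 1) := by simp [mul_comm]

lemma rpow_log_le' {γ₁ γ₂ x : ℝ} (hγ₁ : 0 < γ₁) (hγ₂ : 0 ≤ γ₂) (hx : 1 ≤ x) :
    x ^ (-γ₁) * Real.log x ^ γ₂ ≤ ((γ₂ + 1) / γ₁) ^ γ₂ := by
  set ε := γ₁ / (γ₂ + 1) with hε
  have hε0 : 0 < ε := div_pos hγ₁ (by linarith)
  have hx0 : (0:ℝ) ≤ x := by linarith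
  have hlog : Real.log x ≤ x ^ ε / ε := Real.log_le_rpow_div hx0 hε0
  have hlog0 : 0 ≤ Real.log x := Real.log_nonneg hx
  have h1 : Real.log x ^ γ₂ ≤ (x ^ ε / ε) ^ γ₂ := Real.rpow_le_rpow hlog0 hlog hγ₂
  have h2 : (x ^ ε / ε) ^ γ₂ = x ^ (ε * γ₂) / ε ^ γ₂ := by
    rw [Real.div_rpow (Real.rpow_nonneg hx0 _) hε0.le, ← Real.rpow_mul hx0]
  have h3 : x ^ (-γ₁) * Real.log x ^ γ₂ ≤ x ^ (-γ₁) * (x ^ (ε * γ₂) / ε ^ γ₂) := by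
    apply mul_le_mul_of_nonneg_left _ (Real.rpow_nonneg hx0 _)
    rw [← h2]; exact h1
  have h4 : x ^ (-γ₁) * (x ^ (ε * γ₂) / ε ^ γ₂) = x ^ (ε * γ₂ - γ₁) / ε ^ γ₂ := by
    rw [mul_div_assoc', ← Real.rpow_add (by linarith : (0:ℝ) < x)]
    ring_nf
  have h5 : x ^ (ε * γ₂ - γ₁) ≤ 1 := by
    apply Real.rpow_le_one_of_one_le_of_nonpos hx
    have h : ε * γ₂ ≤ ε * (γ₂ + 1) := mul_le_mul_of_nonneg_left (by linarith) hε0.le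
    have hεc : ε * (γ₂ + 1) = γ₁ := div_mul_cancel₀ _ (by linarith)
    linarith
  have h6 : x ^ (ε * γ₂ - γ₁) / ε ^ γ₂ ≤ 1 / ε ^ γ₂ := by gcongr
  calc x ^ (-γ₁) * Real.log x ^ γ₂ ≤ x ^ (ε * γ₂ - γ₁) / ε ^ γ₂ := by rw [← h4]; exact h3
    _ ≤ 1 / ε ^ γ₂ := h6
    _ = ((γ₂ + 1) / γ₁) ^ γ₂ := by
        have he : ((γ₂ + 1) / γ₁ : ℝ) = 1 / ε := by rw [hε, one_div_div]
        rw [he, Real.div_rpow zero_le_one hε0.le, Real.one_rpow]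

lemma latticePoint_inj' {q m : ℕ} {L₁ : Matrix (Fin q) (Fin q) ℝ}
    {L₂ : Matrix (Fin m) (Fin m) ℝ} (hL₁ : IsUnit L₁.det) (hL₂ : IsUnit L₂.det) :
    Function.Injective (latticePoint L₁ L₂) := by
  intro k j h
  have h1 : L₁.mulVec (fun i => (k.1 i : ℝ)) = L₁.mulVec (fun i => (j.1 i : ℝ)) :=
    congrArg Prod.fst h
  have h2 : L₂.mulVec (fun i => (k.2 i : ℝ)) = L₂.mulVec (fun i => (j.2 i : ℝ)) :=
    congrArg Prod.snd h
  have e1 : (fun i => (k.1 i : ℝ)) = fun i => (j.1 i : ℝ) := by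
    have := congrArg (fun w => L₁⁻¹.mulVec w) h1
    simpa [Matrix.mulVec_mulVec, Matrix.nonsing_inv_mul _ hL₁, Matrix.one_mulVec] using this
  have e2 : (fun i => (k.2 i : ℝ)) = fun i => (j.2 i : ℝ) := by
    have := congrArg (fun w => L₂⁻¹.mulVec w) h2
    simpa [Matrix.mulVec_mulVec, Matrix.nonsing_inv_mul _ hL₂, Matrix.one_mulVec] using this
  apply Prod.ext
  · funext i
    exact_mod_cast congrFun e1 i
  · funext i
    exact_mod_cast congrFun e2 i

lemma ballSet_finite' {q m : ℕ} {α : ℝ} {M₁ : Matrix (Fin q) (Fin q) ℝ}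
    {M₂ : Matrix (Fin m) (Fin m) ℝ} {L₁ : Matrix (Fin q) (Fin q) ℝ}
    {L₂ : Matrix (Fin m) (Fin m) ℝ} (hα : 0 < α) (hM₁ : IsUnit M₁.det) (hM₂ : IsUnit M₂.det)
    (hL₁ : IsUnit L₁.det) (hL₂ : IsUnit L₂.det) (R : ℝ) :
    {k : (Fin q → ℤ) × (Fin m → ℤ) | latticePoint L₁ L₂ k ∈ homBall α M₁ M₂ R}.Finite := by
  set K₁ := frob L₁⁻¹ * (frob M₁⁻¹ * max R 0) with hK₁
  set K₂ := frob L₂⁻¹ * (frob M₂⁻¹ * (max R 0) ^ 2) with hK₂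
  apply Set.Finite.subset (Set.Finite.prod (finite_int_vec' (n := q) K₁)
    (finite_int_vec' (n := m) K₂))
  intro k hk
  have hk' : homNorm α M₁ M₂ (latticePoint L₁ L₂ k) ≤ max R 0 :=
    le_trans hk (le_max_left _ _)
  obtain ⟨h1, h2⟩ := homNorm_le_bounds' hα (le_max_right _ _) hk'
  constructor
  · show eNorm (fun i => (k.1 i : ℝ)) ≤ K₁
    calc eNorm (fun i => (k.1 i : ℝ))
        ≤ frob L₁⁻¹ * eNorm (L₁.mulVec (fun i => (k.1 i : ℝ))) := eNorm_le_frobInv' hL₁ _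
      _ ≤ frob L₁⁻¹ * (frob M₁⁻¹ * eNorm (M₁.mulVec (L₁.mulVec (fun i => (k.1 i : ℝ))))) := by
          apply mul_le_mul_of_nonneg_left (eNorm_le_frobInv' hM₁ _) (frob_nonneg' _)
      _ ≤ K₁ := by
          rw [hK₁]
          apply mul_le_mul_of_nonneg_left _ (frob_nonneg' _)
          exact mul_le_mul_of_nonneg_left h1 (frob_nonneg' _)
  · show eNorm (fun i => (k.2 i : ℝ)) ≤ K₂
    calc eNorm (fun i => (k.2 i : ℝ))
        ≤ frob L₂⁻¹ * eNorm (L₂.mulVec (fun i => (k.2 i : ℝ))) := eNorm_le_frobInv' hL₂ _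
      _ ≤ frob L₂⁻¹ * (frob M₂⁻¹ * eNorm (M₂.mulVec (L₂.mulVec (fun i => (k.2 i : ℝ))))) := by
          apply mul_le_mul_of_nonneg_left (eNorm_le_frobInv' hM₂ _) (frob_nonneg' _)
      _ ≤ K₂ := by
          rw [hK₂]
          apply mul_le_mul_of_nonneg_left _ (frob_nonneg' _)
          exact mul_le_mul_of_nonneg_left h2 (frob_nonneg' _)

lemma count_bound_of_disc' {q m : ℕ} {α : ℝ} {M₁ : Matrix (Fin q) (Fin q) ℝ}
    {M₂ : Matrix (Fin m) (Fin m) ℝ} {L₁ : Matrix (Fin q) (Fin q) ℝ}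
    {L₂ : Matrix (Fin m) (Fin m) ℝ} {R c : ℝ} (hR : 0 < R)
    (hV : 0 < (volume (homBall α M₁ M₂ 1)).toReal) (hD : 0 < |L₁.det * L₂.det|)
    (h : discrepancy α M₁ M₂ L₁ L₂ R ≤ c) :
    abs ((latticeCount α M₁ M₂ L₁ L₂ R : ℝ) -
      (volume (homBall α M₁ M₂ 1)).toReal * R ^ (q + 2 * m) / |L₁.det * L₂.det|) ≤
    (volume (homBall α M₁ M₂ 1)).toReal / |L₁.det * L₂.det| * c * R ^ (q + 2 * m) := by
  rw [discrepancy] at h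
  set V := (volume (homBall α M₁ M₂ 1)).toReal with hVd
  set D := |L₁.det * L₂.det| with hDd
  set X := abs ((latticeCount α M₁ M₂ L₁ L₂ R : ℝ) - V * R ^ (q + 2 * m) / D) with hXd
  have hRQ : (0:ℝ) < R ^ (q + 2 * m) := pow_pos hR _
  have hfrac : (0:ℝ) < D / (V * R ^ (q + 2 * m)) := div_pos hD (mul_pos hV hRQ)
  have key : X = D / (V * R ^ (q + 2 * m)) * X * (V * R ^ (q + 2 * m) / D) := by
    field_simp
  calc X = D / (V * R ^ (q + 2 * m)) * X * (V * R ^ (q + 2 * m) / D) := key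
    _ ≤ c * (V * R ^ (q + 2 * m) / D) := by
        apply mul_le_mul_of_nonneg_right h (by positivity)
    _ = V / D * c * R ^ (q + 2 * m) := by ring
set_option maxHeartbeats 2000000 in
theorem lattice_count_near_sphere_average {q m : ℕ} (hq : 2 ≤ q) (hm : 1 ≤ m)
    (U : Fin m → Matrix (Fin q) (Fin q) ℝ)
    (M₁ L₁ : Matrix (Fin q) (Fin q) ℝ) (M₂ L₂ : Matrix (Fin m) (Fin m) ℝ)
    (hM₁ : IsUnit M₁.det) (hM₂ : IsUnit M₂.det) (hL₁ : IsUnit L₁.det) (hL₂ : IsUnit L₂.det)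
    (α : ℝ) (hα : 0 < α)
    (hsub_mul : ∀ p ∈ latticeSet L₁ L₂, ∀ p' ∈ latticeSet L₁ L₂,
      grpMul U p p' ∈ latticeSet L₁ L₂)
    (hsub_inv : ∀ p ∈ latticeSet L₁ L₂, grpInv U p ∈ latticeSet L₁ L₂)
    (C₀ γ₁ γ₂ : ℝ) (hC₀ : 0 < C₀) (hγ₁ : 0 < γ₁) (hγ₂ : 0 ≤ γ₂)
    (hdisc : ∀ R ≥ (8 : ℝ),
      discrepancy α M₁ M₂ L₁ L₂ R ≤ C₀ * R ^ (-γ₁) * Real.log R ^ γ₂) :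
    ∃ C > 0, ∀ T : ℝ, 0 < T → ∀ δ : ℝ, 0 < δ → δ < 1 → ∀ R ≥ (10 : ℝ),
      (Nat.card {pp : ((Fin q → ℝ) × (Fin m → ℝ)) × ((Fin q → ℝ) × (Fin m → ℝ)) //
          pp.1 ∈ latticeSet L₁ L₂ ∧ pp.2 ∈ latticeSet L₁ L₂ ∧
          eNorm pp.1.1 ≤ T ∧ eNorm pp.1.2 ≤ T ^ 2 ∧
          eNorm pp.2.1 ≤ T ∧ eNorm pp.2.2 ≤ T ^ 2 ∧
          |homNorm α M₁ M₂ (grpMul U (grpInv U pp.1) pp.2) - R| ≤ δ} : ℝ) / T ^ (q + 2 * m) ≤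
        C * max (R ^ (((q : ℝ) + 2 * m) - 1) * δ)
          (R ^ (((q : ℝ) + 2 * m) - γ₁) * Real.log R ^ γ₂) := by
  classical
  obtain ⟨V, hVd⟩ : ∃ x : ℝ, x = (volume (homBall α M₁ M₂ 1)).toReal := ⟨_, rfl⟩
  obtain ⟨D, hDd⟩ : ∃ x : ℝ, x = |L₁.det * L₂.det| := ⟨_, rfl⟩
  have hD : 0 < D := by
    rw [hDd]; exact abs_pos.mpr (mul_ne_zero hL₁.ne_zero hL₂.ne_zero)
  have hV : 0 < V := by
    rw [hVd]
    exact ENNReal.toReal_pos (homBall_volume_pos' hα M₁ M₂).ne' (homBall_volume_ne_top' hα hM₁ hM₂)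
  -- constants
  obtain ⟨c₁, hc₁d⟩ : ∃ x : ℝ, x = frob M₁ + frob M₂ + 1 := ⟨_, rfl⟩
  have hc₁ : (1:ℝ) ≤ c₁ := by
    have := frob_nonneg' M₁; have := frob_nonneg' M₂; rw [hc₁d]; linarith
  have hfM₁ : frob M₁ ≤ c₁ := by
    have := frob_nonneg' M₂; rw [hc₁d]; linarith
  have hfM₂ : frob M₂ ≤ c₁ := by
    have := frob_nonneg' M₁; rw [hc₁d]; linarith
  obtain ⟨cU, hcUd⟩ : ∃ x : ℝ, x = (∑ j, frob (U j)) + 1 := ⟨_, rfl⟩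
  have hsum0 : (0:ℝ) ≤ ∑ j, frob (U j) := Finset.sum_nonneg fun j _ => frob_nonneg' _
  have hcU1 : (1:ℝ) ≤ cU := by rw [hcUd]; linarith
  have hcUj : ∀ j, frob (U j) ≤ cU := by
    intro j
    rw [hcUd]
    have := Finset.single_le_sum (f := fun j => frob (U j))
      (fun j _ => frob_nonneg' (U j)) (Finset.mem_univ j)
    linarith
  obtain ⟨tp, htpd⟩ : ∃ x : ℝ, x = (2:ℝ) ^ (1/α) := ⟨_, rfl⟩
  have htp1 : (1:ℝ) ≤ tp := by
    rw [htpd]; exact Real.one_le_rpow one_le_two (by positivity)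
  obtain ⟨sm, hsmd⟩ : ∃ x : ℝ, x = Real.sqrt m := ⟨_, rfl⟩
  have hsm1 : (1:ℝ) ≤ sm := by
    rw [hsmd]
    have h1 : Real.sqrt 1 ≤ Real.sqrt m := Real.sqrt_le_sqrt (by exact_mod_cast hm)
    rwa [Real.sqrt_one] at h1
  obtain ⟨c₄, hc₄d⟩ : ∃ x : ℝ, x = tp * (c₁ * (2 + sm * cU)) := ⟨_, rfl⟩
  have hc₄1 : (1:ℝ) ≤ c₄ := by
    have hx : (0:ℝ) ≤ sm * cU := by nlinarith
    have h2 : (1:ℝ) ≤ c₁ * (2 + sm * cU) := by nlinarith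
    rw [hc₄d]; nlinarith
  have hc₄0 : (0:ℝ) < c₄ := by linarith
  obtain ⟨KP, hKPd⟩ : ∃ x : ℝ, x = C₀ * ((γ₂ + 1)/γ₁) ^ γ₂ := ⟨_, rfl⟩
  have hKP0 : 0 < KP := by
    rw [hKPd]
    exact mul_pos hC₀ (Real.rpow_pos_of_pos (div_pos (by linarith) hγ₁) _)
  obtain ⟨Kd, hKdd⟩ : ∃ x : ℝ, x = (3 * ((q:ℝ) + 2*m) * 2 ^ (q + 2*m - 1) : ℝ) := ⟨_, rfl⟩
  have hKd0 : 0 < Kd := by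
    rw [hKdd]
    have : (0:ℝ) < (q:ℝ) + 2*m := by positivity
    positivity
  obtain ⟨Kt, hKtd⟩ : ∃ x : ℝ, x = C₀ * ((2:ℝ) ^ (q + 2*m) * 2 ^ γ₂ + 2 ^ γ₁) := ⟨_, rfl⟩
  have hKt0 : 0 < Kt := by
    rw [hKtd]
    have h1 : (0:ℝ) < (2:ℝ) ^ (q + 2*m) := by positivity
    have h2 : (0:ℝ) < (2:ℝ) ^ γ₂ := Real.rpow_pos_of_pos (by norm_num) _
    have h3 : (0:ℝ) < (2:ℝ) ^ γ₁ := Real.rpow_pos_of_pos (by norm_num) _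
    have h4 : (0:ℝ) < (2:ℝ) ^ (q + 2*m) * 2 ^ γ₂ := mul_pos h1 h2
    exact mul_pos hC₀ (by linarith)
  have hC0 : (0:ℝ) < (V/D)^2 * (1 + KP) * c₄ ^ (q + 2*m) * (Kd + Kt) := by
    have h1 : (0:ℝ) < V/D := div_pos hV hD
    have h2 : (0:ℝ) < c₄ ^ (q + 2*m) := pow_pos hc₄0 _
    exact mul_pos (mul_pos (mul_pos (pow_pos h1 2) (by linarith)) h2) (by linarith)
  refine ⟨(V/D)^2 * (1 + KP) * c₄ ^ (q + 2*m) * (Kd + Kt), hC0, ?_⟩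
  intro T hT δ hδ0 hδ1 R hR
  have hR0 : (0:ℝ) < R := by linarith
  have hlogR0 : (0:ℝ) ≤ Real.log R := Real.log_nonneg (by linarith)
  obtain ⟨Mx, hMxd⟩ : ∃ x : ℝ, x = max (R ^ (((q : ℝ) + 2 * m) - 1) * δ)
      (R ^ (((q : ℝ) + 2 * m) - γ₁) * Real.log R ^ γ₂) := ⟨_, rfl⟩
  have hMx0 : 0 < Mx := by
    rw [hMxd]
    exact lt_max_of_lt_left (mul_pos (Real.rpow_pos_of_pos hR0 _) hδ0)
  have hT0 : (0:ℝ) ≤ T := hT.le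
  have hT2 : (0:ℝ) ≤ T^2 := sq_nonneg T
  have hc₁0 : (0:ℝ) < c₁ := by linarith
  have hcU0 : (0:ℝ) < cU := by linarith
  have htp0 : (0:ℝ) < tp := by linarith
  have hsm0 : (0:ℝ) < sm := by linarith
  have hsmcU : (0:ℝ) ≤ sm * cU := mul_nonneg hsm0.le hcU0.le
  have hP1 : (1:ℝ) ≤ sm * cU := by
    have := mul_le_mul hsm1 hcU1 zero_le_one (by linarith : (0:ℝ) ≤ sm)
    linarith
  have hc₁sq : c₁ ≤ c₁^2 := by
    rw [sq]; exact le_mul_of_one_le_left hc₁0.le hc₁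
  -- bound on homNorm of single elements from Γ(T)
  have hXbound : ∀ p : (Fin q → ℝ) × (Fin m → ℝ), eNorm p.1 ≤ T → eNorm p.2 ≤ T^2 →
      homNorm α M₁ M₂ p ≤ c₄ * T := by
    intro p h1 h2
    have e1 : eNorm (M₁.mulVec p.1) ≤ c₁ * T := by
      calc eNorm (M₁.mulVec p.1) ≤ frob M₁ * eNorm p.1 := eNorm_mulVec_le' _ _
        _ ≤ c₁ * T := mul_le_mul hfM₁ h1 (eNorm_nonneg' _) hc₁0.le
    have e2 : eNorm (M₂.mulVec p.2) ≤ (c₁ * T)^2 := by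
      calc eNorm (M₂.mulVec p.2) ≤ frob M₂ * eNorm p.2 := eNorm_mulVec_le' _ _
        _ ≤ c₁ * T^2 := mul_le_mul hfM₂ h2 (eNorm_nonneg' _) hc₁0.le
        _ ≤ c₁^2 * T^2 := mul_le_mul_of_nonneg_right hc₁sq hT2
        _ = (c₁ * T)^2 := by ring
    have hmain := homNorm_le_of_le' (M₁ := M₁) (M₂ := M₂) hα
      (A := c₁ * T) (mul_nonneg hc₁0.le hT0) e1 e2
    calc homNorm α M₁ M₂ p ≤ (2:ℝ)^(1/α) * (c₁ * T) := hmain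
      _ = tp * c₁ * T := by rw [htpd]; ring
      _ ≤ tp * (c₁ * (2 + sm * cU)) * T := by
          apply mul_le_mul_of_nonneg_right _ hT0
          calc tp * c₁ = tp * c₁ * 1 := by ring
            _ ≤ tp * c₁ * (2 + sm * cU) := by
                apply mul_le_mul_of_nonneg_left (by linarith) (by positivity)
            _ = tp * (c₁ * (2 + sm * cU)) := by ring
      _ = c₄ * T := by rw [hc₄d]
  have hWbound : ∀ p p' : (Fin q → ℝ) × (Fin m → ℝ), eNorm p.1 ≤ T → eNorm p.2 ≤ T^2 →
      eNorm p'.1 ≤ T → eNorm p'.2 ≤ T^2 →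
      homNorm α M₁ M₂ (grpMul U (grpInv U p) p') ≤ c₄ * T := by
    intro p p' h1 h2 h3 h4
    have hw1n : eNorm (grpMul U (grpInv U p) p').1 ≤ 2 * T := by
      show eNorm (-p.1 + p'.1) ≤ 2 * T
      calc eNorm (-p.1 + p'.1) ≤ eNorm (-p.1) + eNorm p'.1 := eNorm_add_le' _ _
        _ = eNorm p.1 + eNorm p'.1 := by rw [eNorm_neg']
        _ ≤ 2*T := by linarith
    have hw2 : ∀ j, |(grpMul U (grpInv U p) p').2 j| ≤ (2 + cU) * T^2 := by
      intro j
      have e1 : |p.2 j| ≤ T^2 := (abs_le_eNorm' _ j).trans h2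
      have e2 : |p'.2 j| ≤ T^2 := (abs_le_eNorm' _ j).trans h4
      have e3 : |(U j).mulVec p.1 ⬝ᵥ p.1| ≤ cU * T^2 := by
        calc |(U j).mulVec p.1 ⬝ᵥ p.1| ≤ eNorm ((U j).mulVec p.1) * eNorm p.1 :=
              abs_dotProduct_le' _ _
          _ ≤ (frob (U j) * eNorm p.1) * eNorm p.1 :=
              mul_le_mul_of_nonneg_right (eNorm_mulVec_le' _ _) (eNorm_nonneg' _)
          _ ≤ (cU * T) * T :=
              mul_le_mul (mul_le_mul (hcUj j) h1 (eNorm_nonneg' _) hcU0.le) h1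
                (eNorm_nonneg' _) (mul_nonneg hcU0.le hT0)
          _ = cU * T^2 := by ring
      have e4 : |(U j).mulVec (-p.1) ⬝ᵥ p'.1| ≤ cU * T^2 := by
        calc |(U j).mulVec (-p.1) ⬝ᵥ p'.1| ≤ eNorm ((U j).mulVec (-p.1)) * eNorm p'.1 :=
              abs_dotProduct_le' _ _
          _ ≤ (frob (U j) * eNorm (-p.1)) * eNorm p'.1 :=
              mul_le_mul_of_nonneg_right (eNorm_mulVec_le' _ _) (eNorm_nonneg' _)
          _ = (frob (U j) * eNorm p.1) * eNorm p'.1 := by rw [eNorm_neg']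
          _ ≤ (cU * T) * T :=
              mul_le_mul (mul_le_mul (hcUj j) h1 (eNorm_nonneg' _) hcU0.le) h3
                (eNorm_nonneg' _) (mul_nonneg hcU0.le hT0)
          _ = cU * T^2 := by ring
      have hval : (grpMul U (grpInv U p) p').2 j =
          (-p.2 j + (1/2) * ((U j).mulVec p.1 ⬝ᵥ p.1)) + p'.2 j
            + (1/2) * ((U j).mulVec (-p.1) ⬝ᵥ p'.1) := rfl
      rw [hval]
      have t1 : |(-p.2 j + (1/2) * ((U j).mulVec p.1 ⬝ᵥ p.1)) + p'.2 j
            + (1/2) * ((U j).mulVec (-p.1) ⬝ᵥ p'.1)|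
          ≤ |p.2 j| + (1/2) * |(U j).mulVec p.1 ⬝ᵥ p.1| + |p'.2 j|
            + (1/2) * |(U j).mulVec (-p.1) ⬝ᵥ p'.1| := by
        calc _ ≤ |(-p.2 j + (1/2) * ((U j).mulVec p.1 ⬝ᵥ p.1)) + p'.2 j|
              + |(1/2) * ((U j).mulVec (-p.1) ⬝ᵥ p'.1)| := abs_add_le _ _
          _ ≤ (|(-p.2 j + (1/2) * ((U j).mulVec p.1 ⬝ᵥ p.1))| + |p'.2 j|)
              + |(1/2) * ((U j).mulVec (-p.1) ⬝ᵥ p'.1)| := by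
                have := abs_add_le (-p.2 j + (1/2) * ((U j).mulVec p.1 ⬝ᵥ p.1)) (p'.2 j)
                linarith
          _ ≤ _ := by
                have ha := abs_add_le (-p.2 j) ((1/2) * ((U j).mulVec p.1 ⬝ᵥ p.1))
                rw [abs_neg, abs_mul] at ha
                rw [abs_mul]
                have h12 : |(1:ℝ)/2| = 1/2 := by norm_num
                rw [h12] at ha ⊢
                linarith
      calc _ ≤ _ := t1
        _ ≤ (2 + cU) * T^2 := by linarith
    have hw2n : eNorm (grpMul U (grpInv U p) p').2 ≤ sm * ((2 + cU) * T^2) := by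
      rw [hsmd]
      exact eNorm_le_sqrt_card' _ (mul_nonneg (by linarith) hT2) hw2
    have e1 : eNorm (M₁.mulVec (grpMul U (grpInv U p) p').1) ≤ c₁ * (2 + sm*cU) * T := by
      calc eNorm (M₁.mulVec (grpMul U (grpInv U p) p').1)
          ≤ frob M₁ * eNorm (grpMul U (grpInv U p) p').1 := eNorm_mulVec_le' _ _
        _ ≤ c₁ * (2*T) := mul_le_mul hfM₁ hw1n (eNorm_nonneg' _) hc₁0.le
        _ = (c₁ * 2) * T := by ring
        _ ≤ (c₁ * (2 + sm*cU)) * T := by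
            apply mul_le_mul_of_nonneg_right _ hT0
            apply mul_le_mul_of_nonneg_left (by linarith) hc₁0.le
        _ = c₁ * (2 + sm*cU) * T := by ring
    have e2 : eNorm (M₂.mulVec (grpMul U (grpInv U p) p').2) ≤ (c₁ * (2 + sm*cU) * T)^2 := by
      have hsmP : sm ≤ sm * cU := le_mul_of_one_le_right hsm0.le hcU1
      have hPP : sm * cU ≤ (sm * cU)^2 := by
        rw [sq]; exact le_mul_of_one_le_left hsmcU hP1
      have hkey : c₁ * (sm * (2 + cU)) ≤ c₁^2 * (2 + sm*cU)^2 := by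
        have hin : sm * (2 + cU) ≤ (2 + sm*cU)^2 := by
          have hexp : (2 + sm*cU)^2 = 4 + 4*(sm*cU) + (sm*cU)^2 := by ring
          have hlhs : sm * (2 + cU) = 2*sm + sm*cU := by ring
          rw [hexp, hlhs]
          linarith
        calc c₁ * (sm * (2 + cU)) ≤ c₁ * (2 + sm*cU)^2 :=
              mul_le_mul_of_nonneg_left hin hc₁0.le
          _ ≤ c₁^2 * (2 + sm*cU)^2 := mul_le_mul_of_nonneg_right hc₁sq (sq_nonneg _)
      calc eNorm (M₂.mulVec (grpMul U (grpInv U p) p').2)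
          ≤ frob M₂ * eNorm (grpMul U (grpInv U p) p').2 := eNorm_mulVec_le' _ _
        _ ≤ c₁ * (sm * ((2 + cU) * T^2)) := mul_le_mul hfM₂ hw2n (eNorm_nonneg' _) hc₁0.le
        _ = (c₁ * (sm * (2 + cU))) * T^2 := by ring
        _ ≤ (c₁^2 * (2 + sm*cU)^2) * T^2 := mul_le_mul_of_nonneg_right hkey hT2
        _ = (c₁ * (2 + sm*cU) * T)^2 := by ring
    have hmain := homNorm_le_of_le' (M₁ := M₁) (M₂ := M₂) hα
      (A := c₁ * (2 + sm*cU) * T)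
      (mul_nonneg (mul_nonneg hc₁0.le (by linarith)) hT0) e1 e2
    calc homNorm α M₁ M₂ (grpMul U (grpInv U p) p') ≤ (2:ℝ)^(1/α) * (c₁ * (2 + sm*cU) * T) :=
          hmain
      _ = c₄ * T := by rw [hc₄d, htpd]; ring
  -- index-level ball sets
  have hBfin : ∀ r : ℝ, {k : (Fin q → ℤ) × (Fin m → ℤ) |
      latticePoint L₁ L₂ k ∈ homBall α M₁ M₂ r}.Finite :=
    fun r => ballSet_finite' hα hM₁ hM₂ hL₁ hL₂ r
  have hcntB : ∀ r : ℝ, latticeCount α M₁ M₂ L₁ L₂ r = {k : (Fin q → ℤ) × (Fin m → ℤ) |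
      latticePoint L₁ L₂ k ∈ homBall α M₁ M₂ r}.ncard :=
    fun r => Nat.card_coe_set_eq _
  -- the point sets
  by_cases hsmall : c₄ * T < 9
  · -- in this case the counted set is empty
    have hempty : IsEmpty {pp : ((Fin q → ℝ) × (Fin m → ℝ)) × ((Fin q → ℝ) × (Fin m → ℝ)) //
        pp.1 ∈ latticeSet L₁ L₂ ∧ pp.2 ∈ latticeSet L₁ L₂ ∧
        eNorm pp.1.1 ≤ T ∧ eNorm pp.1.2 ≤ T ^ 2 ∧
        eNorm pp.2.1 ≤ T ∧ eNorm pp.2.2 ≤ T ^ 2 ∧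
        |homNorm α M₁ M₂ (grpMul U (grpInv U pp.1) pp.2) - R| ≤ δ} := by
      constructor
      rintro ⟨⟨p, p'⟩, hlat, hlat', ha1, ha2, ha3, ha4, ha5⟩
      have hw := hWbound p p' ha1 ha2 ha3 ha4
      have hlow := (abs_le.mp ha5).1
      simp only at hw hlow
      linarith
    rw [Nat.card_of_isEmpty, Nat.cast_zero, zero_div]
    have : (0:ℝ) < R ^ (((q : ℝ) + 2 * m) - 1) * δ := mul_pos (Real.rpow_pos_of_pos hR0 _) hδ0
    have hle : (0:ℝ) ≤ max (R ^ (((q : ℝ) + 2 * m) - 1) * δ)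
        (R ^ (((q : ℝ) + 2 * m) - γ₁) * Real.log R ^ γ₂) := le_trans this.le (le_max_left _ _)
    exact mul_nonneg hC0.le hle
  · push_neg at hsmall
    -- count bounds from the discrepancy hypothesis
    have habs1 := count_bound_of_disc' (q := q) (m := m)
      (by linarith : (0:ℝ) < R + δ) (hVd ▸ hV) (hDd ▸ hD) (hdisc (R+δ) (by linarith))
    have habs2 := count_bound_of_disc' (q := q) (m := m)
      (by linarith : (0:ℝ) < R - 2*δ) (hVd ▸ hV) (hDd ▸ hD) (hdisc (R-2*δ) (by linarith))
    have habs3 := count_bound_of_disc' (q := q) (m := m)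
      (by linarith : (0:ℝ) < c₄*T) (hVd ▸ hV) (hDd ▸ hD) (hdisc (c₄*T) (by linarith))
    rw [← hVd, ← hDd] at habs1 habs2 habs3
    -- the KP bound at radius c₄ T
    have hKPb : C₀ * (c₄*T) ^ (-γ₁) * Real.log (c₄*T) ^ γ₂ ≤ KP := by
      have hx1 : (1:ℝ) ≤ c₄*T := by linarith
      have h := rpow_log_le' hγ₁ hγ₂ hx1
      calc C₀ * (c₄*T) ^ (-γ₁) * Real.log (c₄*T) ^ γ₂
          = C₀ * ((c₄*T) ^ (-γ₁) * Real.log (c₄*T) ^ γ₂) := by ring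
        _ ≤ C₀ * (((γ₂+1)/γ₁) ^ γ₂) := mul_le_mul_of_nonneg_left h hC₀.le
        _ = KP := by rw [hKPd]
    have hcnt3 : (latticeCount α M₁ M₂ L₁ L₂ (c₄*T) : ℝ) ≤ V/D * (1+KP) * (c₄*T)^(q+2*m) := by
      have hup := (abs_le.mp habs3).2
      have htail : V / D * (C₀ * (c₄*T) ^ (-γ₁) * Real.log (c₄*T) ^ γ₂) * (c₄*T)^(q+2*m)
          ≤ V / D * KP * (c₄*T)^(q+2*m) := by
        apply mul_le_mul_of_nonneg_right _ (pow_nonneg (by linarith) _)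
        exact mul_le_mul_of_nonneg_left hKPb (div_pos hV hD).le
      have heq : V * (c₄*T)^(q+2*m) / D + V/D * KP * (c₄*T)^(q+2*m)
          = V/D * (1+KP) * (c₄*T)^(q+2*m) := by ring
      linarith
    -- the annulus count
    have hAsub : {k : (Fin q → ℤ) × (Fin m → ℤ) |
        |homNorm α M₁ M₂ (latticePoint L₁ L₂ k) - R| ≤ δ}
        ⊆ {k | latticePoint L₁ L₂ k ∈ homBall α M₁ M₂ (R + δ)} := by
      intro k hk
      have hk' : |homNorm α M₁ M₂ (latticePoint L₁ L₂ k) - R| ≤ δ := hk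
      have h := (abs_le.mp hk').2
      show homNorm α M₁ M₂ (latticePoint L₁ L₂ k) ≤ R + δ
      linarith
    have hAfin := (hBfin (R+δ)).subset hAsub
    have hannulus : ({k : (Fin q → ℤ) × (Fin m → ℤ) |
        |homNorm α M₁ M₂ (latticePoint L₁ L₂ k) - R| ≤ δ}.ncard : ℝ)
        ≤ (latticeCount α M₁ M₂ L₁ L₂ (R + δ) : ℝ)
          - (latticeCount α M₁ M₂ L₁ L₂ (R - 2*δ) : ℝ) := by
      have hdisj : Disjoint {k : (Fin q → ℤ) × (Fin m → ℤ) |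
          |homNorm α M₁ M₂ (latticePoint L₁ L₂ k) - R| ≤ δ}
          {k | latticePoint L₁ L₂ k ∈ homBall α M₁ M₂ (R - 2*δ)} := by
        rw [Set.disjoint_left]
        intro k hk hk2
        have hk' : |homNorm α M₁ M₂ (latticePoint L₁ L₂ k) - R| ≤ δ := hk
        have hlow := (abs_le.mp hk').1
        have h2 : homNorm α M₁ M₂ (latticePoint L₁ L₂ k) ≤ R - 2*δ := hk2
        linarith
      have hun : {k : (Fin q → ℤ) × (Fin m → ℤ) |
          |homNorm α M₁ M₂ (latticePoint L₁ L₂ k) - R| ≤ δ}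
          ∪ {k | latticePoint L₁ L₂ k ∈ homBall α M₁ M₂ (R - 2*δ)}
          ⊆ {k | latticePoint L₁ L₂ k ∈ homBall α M₁ M₂ (R + δ)} := by
        apply Set.union_subset hAsub
        intro k hk
        show homNorm α M₁ M₂ (latticePoint L₁ L₂ k) ≤ R + δ
        have h2 : homNorm α M₁ M₂ (latticePoint L₁ L₂ k) ≤ R - 2*δ := hk
        linarith
      have h1 := Set.ncard_union_eq hdisj hAfin (hBfin (R-2*δ))
      have h2 := Set.ncard_le_ncard hun (hBfin (R+δ))
      rw [h1] at h2
      rw [hcntB (R+δ), hcntB (R-2*δ)]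
      have h3 : ({k : (Fin q → ℤ) × (Fin m → ℤ) |
          |homNorm α M₁ M₂ (latticePoint L₁ L₂ k) - R| ≤ δ}.ncard : ℝ)
          + ({k : (Fin q → ℤ) × (Fin m → ℤ) |
            latticePoint L₁ L₂ k ∈ homBall α M₁ M₂ (R - 2*δ)}.ncard : ℝ)
          ≤ ({k : (Fin q → ℤ) × (Fin m → ℤ) |
            latticePoint L₁ L₂ k ∈ homBall α M₁ M₂ (R + δ)}.ncard : ℝ) := by
        exact_mod_cast h2
      linarith
    -- tail estimates
    have ht1 : (R+δ) ^ (-γ₁) ≤ R ^ (-γ₁) :=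
      Real.rpow_le_rpow_of_nonpos hR0 (by linarith) (by linarith)
    have hlogRδ0 : (0:ℝ) ≤ Real.log (R+δ) := Real.log_nonneg (by linarith)
    have ht2 : Real.log (R+δ) ^ γ₂ ≤ 2^γ₂ * Real.log R ^ γ₂ := by
      have hlt : Real.log (R+δ) ≤ 2 * Real.log R := by
        have ha := Real.log_le_log (by linarith : (0:ℝ) < R+δ) (by linarith : R+δ ≤ 2*R)
        rw [Real.log_mul (by norm_num) (by linarith)] at ha
        have hb := Real.log_le_log (by norm_num : (0:ℝ) < 2) (by linarith : (2:ℝ) ≤ R)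
        linarith
      calc Real.log (R+δ) ^ γ₂ ≤ (2 * Real.log R) ^ γ₂ :=
            Real.rpow_le_rpow hlogRδ0 hlt hγ₂
        _ = 2^γ₂ * Real.log R ^ γ₂ := Real.mul_rpow (by norm_num) hlogR0
    have ht3 : ((R+δ):ℝ) ^ (q+2*m) ≤ 2^(q+2*m) * R^(q+2*m) := by
      calc ((R+δ):ℝ) ^ (q+2*m) ≤ (2*R) ^ (q+2*m) :=
            pow_le_pow_left₀ (by linarith) (by linarith) _
        _ = 2^(q+2*m) * R^(q+2*m) := mul_pow 2 R _
    have ht4 : (R-2*δ) ^ (-γ₁) ≤ 2^γ₁ * R ^ (-γ₁) := by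
      have ha : (R-2*δ) ^ (-γ₁) ≤ (R/2) ^ (-γ₁) :=
        Real.rpow_le_rpow_of_nonpos (by linarith) (by linarith) (by linarith)
      have hb : ((R/2):ℝ) ^ (-γ₁) = 2^γ₁ * R ^ (-γ₁) := by
        rw [Real.div_rpow (by linarith) (by norm_num),
          Real.rpow_neg (by norm_num : (0:ℝ) ≤ 2), div_eq_mul_inv, inv_inv, mul_comm]
      linarith [hb ▸ ha]
    have ht5 : Real.log (R-2*δ) ^ γ₂ ≤ Real.log R ^ γ₂ :=
      Real.rpow_le_rpow (Real.log_nonneg (by linarith))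
        (Real.log_le_log (by linarith) (by linarith)) hγ₂
    have ht6 : (R-2*δ) ^ (q+2*m) ≤ R ^ (q+2*m) :=
      pow_le_pow_left₀ (by linarith) (by linarith) _
    -- geometric difference
    have hgeo : ((R+δ):ℝ)^(q+2*m) - (R-2*δ)^(q+2*m)
        ≤ ((q:ℝ)+2*m) * (2^(q+2*m-1) * R^(q+2*m-1)) * (3*δ) := by
      have ha := pow_sub_pow_le' (n := q+2*m)
        (by linarith : (0:ℝ) ≤ R-2*δ) (by linarith : R-2*δ ≤ R+δ)
      have hb : ((R+δ):ℝ) ^ (q+2*m-1) ≤ 2^(q+2*m-1) * R^(q+2*m-1) := by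
        calc ((R+δ):ℝ) ^ (q+2*m-1) ≤ (2*R) ^ (q+2*m-1) :=
              pow_le_pow_left₀ (by linarith) (by linarith) _
          _ = 2^(q+2*m-1) * R^(q+2*m-1) := mul_pow 2 R _
      have hc : ((R+δ) - (R-2*δ)) = 3*δ := by ring
      have hd : ((q+2*m : ℕ):ℝ) = (q:ℝ)+2*m := by push_cast; ring
      rw [hc, hd] at ha
      calc ((R+δ):ℝ)^(q+2*m) - (R-2*δ)^(q+2*m)
          ≤ ((q:ℝ)+2*m) * (R+δ)^(q+2*m-1) * (3*δ) := ha
        _ ≤ ((q:ℝ)+2*m) * (2^(q+2*m-1) * R^(q+2*m-1)) * (3*δ) := by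
            apply mul_le_mul_of_nonneg_right _ (by linarith)
            apply mul_le_mul_of_nonneg_left hb (by positivity)
    -- tail terms combined
    have htail1 : V/D * (C₀ * (R+δ)^(-γ₁) * Real.log (R+δ)^γ₂) * ((R+δ):ℝ)^(q+2*m)
        ≤ (V/D * C₀) * ((2^(q+2*m) * 2^γ₂) * (R^(-γ₁) * Real.log R ^ γ₂ * R^(q+2*m))) := by
      have hb1 : (R+δ)^(-γ₁) * Real.log (R+δ)^γ₂ ≤ R^(-γ₁) * (2^γ₂ * Real.log R ^ γ₂) :=
        mul_le_mul ht1 ht2 (Real.rpow_nonneg hlogRδ0 _) (Real.rpow_nonneg hR0.le _)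
      have hb2 : (R+δ)^(-γ₁) * Real.log (R+δ)^γ₂ * ((R+δ):ℝ)^(q+2*m)
          ≤ (R^(-γ₁) * (2^γ₂ * Real.log R ^ γ₂)) * (2^(q+2*m) * R^(q+2*m)) :=
        mul_le_mul hb1 ht3 (pow_nonneg (by linarith) _)
          (mul_nonneg (Real.rpow_nonneg hR0.le _)
            (mul_nonneg (Real.rpow_nonneg (by norm_num) _) (Real.rpow_nonneg hlogR0 _)))
      calc V/D * (C₀ * (R+δ)^(-γ₁) * Real.log (R+δ)^γ₂) * ((R+δ):ℝ)^(q+2*m)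
          = (V/D * C₀) * ((R+δ)^(-γ₁) * Real.log (R+δ)^γ₂ * ((R+δ):ℝ)^(q+2*m)) := by ring
        _ ≤ (V/D * C₀) * ((R^(-γ₁) * (2^γ₂ * Real.log R ^ γ₂)) * (2^(q+2*m) * R^(q+2*m))) := by
            apply mul_le_mul_of_nonneg_left hb2
            exact mul_nonneg (div_pos hV hD).le hC₀.le
        _ = (V/D * C₀) * ((2^(q+2*m) * 2^γ₂) * (R^(-γ₁) * Real.log R ^ γ₂ * R^(q+2*m))) := by
            ring
    have htail2 : V/D * (C₀ * (R-2*δ)^(-γ₁) * Real.log (R-2*δ)^γ₂) * ((R-2*δ):ℝ)^(q+2*m)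
        ≤ (V/D * C₀) * ((2:ℝ)^γ₁ * (R^(-γ₁) * Real.log R ^ γ₂ * R^(q+2*m))) := by
      have hlog20 : (0:ℝ) ≤ Real.log (R-2*δ) := Real.log_nonneg (by linarith)
      have hb1 : (R-2*δ)^(-γ₁) * Real.log (R-2*δ)^γ₂
          ≤ (2^γ₁ * R^(-γ₁)) * Real.log R ^ γ₂ :=
        mul_le_mul ht4 ht5 (Real.rpow_nonneg hlog20 _)
          (mul_nonneg (Real.rpow_nonneg (by norm_num) _) (Real.rpow_nonneg hR0.le _))
      have hb2 : (R-2*δ)^(-γ₁) * Real.log (R-2*δ)^γ₂ * ((R-2*δ):ℝ)^(q+2*m)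
          ≤ ((2^γ₁ * R^(-γ₁)) * Real.log R ^ γ₂) * R^(q+2*m) :=
        mul_le_mul hb1 ht6 (pow_nonneg (by linarith) _)
          (mul_nonneg (mul_nonneg (Real.rpow_nonneg (by norm_num) _)
            (Real.rpow_nonneg hR0.le _)) (Real.rpow_nonneg hlogR0 _))
      calc V/D * (C₀ * (R-2*δ)^(-γ₁) * Real.log (R-2*δ)^γ₂) * ((R-2*δ):ℝ)^(q+2*m)
          = (V/D * C₀) * ((R-2*δ)^(-γ₁) * Real.log (R-2*δ)^γ₂ * ((R-2*δ):ℝ)^(q+2*m)) := by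
            ring
        _ ≤ (V/D * C₀) * (((2^γ₁ * R^(-γ₁)) * Real.log R ^ γ₂) * R^(q+2*m)) := by
            apply mul_le_mul_of_nonneg_left hb2
            exact mul_nonneg (div_pos hV hD).le hC₀.le
        _ = (V/D * C₀) * ((2:ℝ)^γ₁ * (R^(-γ₁) * Real.log R ^ γ₂ * R^(q+2*m))) := by ring
    -- full annulus real bound
    have hannR : ({k : (Fin q → ℤ) × (Fin m → ℤ) |
        |homNorm α M₁ M₂ (latticePoint L₁ L₂ k) - R| ≤ δ}.ncard : ℝ)
        ≤ V/D * (((q:ℝ)+2*m) * (2^(q+2*m-1) * R^(q+2*m-1)) * (3*δ))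
          + (V/D * C₀) * (((2:ℝ)^(q+2*m) * 2^γ₂ + 2^γ₁)
              * (R^(-γ₁) * Real.log R ^ γ₂ * R^(q+2*m))) := by
      have hup := (abs_le.mp habs1).2
      have hlo := (abs_le.mp habs2).1
      have hgeo2 : V/D * (((R+δ):ℝ)^(q+2*m) - (R-2*δ)^(q+2*m))
          ≤ V/D * (((q:ℝ)+2*m) * (2^(q+2*m-1) * R^(q+2*m-1)) * (3*δ)) :=
        mul_le_mul_of_nonneg_left hgeo (div_pos hV hD).le
      have he1 : V * ((R+δ):ℝ)^(q+2*m) / D = V/D * ((R+δ):ℝ)^(q+2*m) := by ring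
      have he2 : V * ((R-2*δ):ℝ)^(q+2*m) / D = V/D * ((R-2*δ):ℝ)^(q+2*m) := by ring
      have hsplit : (V/D * C₀) * (((2:ℝ)^(q+2*m) * 2^γ₂ + 2^γ₁)
            * (R^(-γ₁) * Real.log R ^ γ₂ * R^(q+2*m)))
          = (V/D * C₀) * ((2^(q+2*m) * 2^γ₂) * (R^(-γ₁) * Real.log R ^ γ₂ * R^(q+2*m)))
            + (V/D * C₀) * ((2:ℝ)^γ₁ * (R^(-γ₁) * Real.log R ^ γ₂ * R^(q+2*m))) := by ring
      rw [hsplit]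
      linarith [hannulus]
    -- X and Y point sets
    have hXsub : {p : (Fin q → ℝ) × (Fin m → ℝ) |
        p ∈ latticeSet L₁ L₂ ∧ eNorm p.1 ≤ T ∧ eNorm p.2 ≤ T ^ 2}
        ⊆ latticePoint L₁ L₂ '' {k | latticePoint L₁ L₂ k ∈ homBall α M₁ M₂ (c₄*T)} := by
      rintro p ⟨⟨k, hk⟩, hp1, hp2⟩
      refine ⟨k, ?_, hk⟩
      show homNorm α M₁ M₂ (latticePoint L₁ L₂ k) ≤ c₄*T
      rw [hk]
      exact hXbound p hp1 hp2
    have hXfin : {p : (Fin q → ℝ) × (Fin m → ℝ) |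
        p ∈ latticeSet L₁ L₂ ∧ eNorm p.1 ≤ T ∧ eNorm p.2 ≤ T ^ 2}.Finite :=
      ((hBfin (c₄*T)).image _).subset hXsub
    have hXcard : ({p : (Fin q → ℝ) × (Fin m → ℝ) |
        p ∈ latticeSet L₁ L₂ ∧ eNorm p.1 ≤ T ∧ eNorm p.2 ≤ T ^ 2}.ncard : ℝ)
        ≤ (latticeCount α M₁ M₂ L₁ L₂ (c₄*T) : ℝ) := by
      rw [hcntB (c₄*T)]
      have ha := Set.ncard_le_ncard hXsub ((hBfin (c₄*T)).image _)
      have hb := Set.ncard_image_le (f := latticePoint L₁ L₂) (hBfin (c₄*T))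
      exact_mod_cast le_trans ha hb
    have hYsub : {p : (Fin q → ℝ) × (Fin m → ℝ) |
        p ∈ latticeSet L₁ L₂ ∧ |homNorm α M₁ M₂ p - R| ≤ δ}
        ⊆ latticePoint L₁ L₂ ''
          {k | |homNorm α M₁ M₂ (latticePoint L₁ L₂ k) - R| ≤ δ} := by
      rintro p ⟨⟨k, hk⟩, hp⟩
      refine ⟨k, ?_, hk⟩
      show |homNorm α M₁ M₂ (latticePoint L₁ L₂ k) - R| ≤ δ
      rw [hk]
      exact hp
    have hYfin : {p : (Fin q → ℝ) × (Fin m → ℝ) |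
        p ∈ latticeSet L₁ L₂ ∧ |homNorm α M₁ M₂ p - R| ≤ δ}.Finite :=
      (hAfin.image _).subset hYsub
    have hYcard : ({p : (Fin q → ℝ) × (Fin m → ℝ) |
        p ∈ latticeSet L₁ L₂ ∧ |homNorm α M₁ M₂ p - R| ≤ δ}.ncard : ℝ)
        ≤ ({k : (Fin q → ℤ) × (Fin m → ℤ) |
          |homNorm α M₁ M₂ (latticePoint L₁ L₂ k) - R| ≤ δ}.ncard : ℝ) := by
      have ha := Set.ncard_le_ncard hYsub (hAfin.image _)
      have hb := Set.ncard_image_le (f := latticePoint L₁ L₂) hAfin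
      exact_mod_cast le_trans ha hb
    haveI hXsubFin : Finite ↥{p : (Fin q → ℝ) × (Fin m → ℝ) |
        p ∈ latticeSet L₁ L₂ ∧ eNorm p.1 ≤ T ∧ eNorm p.2 ≤ T ^ 2} := hXfin.to_subtype
    haveI hYsubFin : Finite ↥{p : (Fin q → ℝ) × (Fin m → ℝ) |
        p ∈ latticeSet L₁ L₂ ∧ |homNorm α M₁ M₂ p - R| ≤ δ} := hYfin.to_subtype
    have hcardS : (Nat.card {pp : ((Fin q → ℝ) × (Fin m → ℝ)) × ((Fin q → ℝ) × (Fin m → ℝ)) //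
        pp.1 ∈ latticeSet L₁ L₂ ∧ pp.2 ∈ latticeSet L₁ L₂ ∧
        eNorm pp.1.1 ≤ T ∧ eNorm pp.1.2 ≤ T ^ 2 ∧
        eNorm pp.2.1 ≤ T ∧ eNorm pp.2.2 ≤ T ^ 2 ∧
        |homNorm α M₁ M₂ (grpMul U (grpInv U pp.1) pp.2) - R| ≤ δ} : ℝ)
        ≤ ({p : (Fin q → ℝ) × (Fin m → ℝ) |
            p ∈ latticeSet L₁ L₂ ∧ eNorm p.1 ≤ T ∧ eNorm p.2 ≤ T ^ 2}.ncard : ℝ)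
          * ({p : (Fin q → ℝ) × (Fin m → ℝ) |
            p ∈ latticeSet L₁ L₂ ∧ |homNorm α M₁ M₂ p - R| ≤ δ}.ncard : ℝ) := by
      have hinj : Function.Injective
          (fun s : {pp : ((Fin q → ℝ) × (Fin m → ℝ)) × ((Fin q → ℝ) × (Fin m → ℝ)) //
            pp.1 ∈ latticeSet L₁ L₂ ∧ pp.2 ∈ latticeSet L₁ L₂ ∧
            eNorm pp.1.1 ≤ T ∧ eNorm pp.1.2 ≤ T ^ 2 ∧
            eNorm pp.2.1 ≤ T ∧ eNorm pp.2.2 ≤ T ^ 2 ∧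
            |homNorm α M₁ M₂ (grpMul U (grpInv U pp.1) pp.2) - R| ≤ δ} =>
          ((⟨s.val.1, s.prop.1, s.prop.2.2.1, s.prop.2.2.2.1⟩ :
              ↥{p : (Fin q → ℝ) × (Fin m → ℝ) |
                p ∈ latticeSet L₁ L₂ ∧ eNorm p.1 ≤ T ∧ eNorm p.2 ≤ T ^ 2}),
           (⟨grpMul U (grpInv U s.val.1) s.val.2,
              hsub_mul _ (hsub_inv _ s.prop.1) _ s.prop.2.1, s.prop.2.2.2.2.2.2⟩ :
              ↥{p : (Fin q → ℝ) × (Fin m → ℝ) |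
                p ∈ latticeSet L₁ L₂ ∧ |homNorm α M₁ M₂ p - R| ≤ δ}))) := by
        intro a b h
        have h1 : a.val.1 = b.val.1 := congrArg (fun z => z.1.val) h
        have h2 : grpMul U (grpInv U a.val.1) a.val.2
            = grpMul U (grpInv U b.val.1) b.val.2 := congrArg (fun z => z.2.val) h
        have h3 : grpMul U a.val.1 (grpMul U (grpInv U a.val.1) a.val.2)
            = grpMul U b.val.1 (grpMul U (grpInv U b.val.1) b.val.2) := by rw [h2, h1]
        rw [grp_cancel', grp_cancel'] at h3
        exact Subtype.ext (Prod.ext h1 h3)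
      have hle := Nat.card_le_card_of_injective _ hinj
      rw [Nat.card_prod, Nat.card_coe_set_eq, Nat.card_coe_set_eq] at hle
      exact_mod_cast hle
    -- exponent conversions
    have hc1 : ((R:ℝ))^(q+2*m-1) = R ^ (((q : ℝ) + 2 * m) - 1) := by
      rw [← Real.rpow_natCast R (q+2*m-1)]
      congr 1
      rw [Nat.cast_sub (by omega : 1 ≤ q + 2*m)]
      push_cast
      ring
    have hc2 : R^(-γ₁) * Real.log R ^ γ₂ * (R:ℝ)^(q+2*m)
        = R ^ (((q:ℝ) + 2*m) - γ₁) * Real.log R ^ γ₂ := by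
      have hx : R ^ (((q:ℝ)+2*m) - γ₁) = R^(-γ₁) * R ^ ((q+2*m : ℕ) : ℝ) := by
        rw [← Real.rpow_add hR0]
        congr 1
        push_cast
        ring
      rw [hx, Real.rpow_natCast]
      ring
    -- Y bound by Mx
    have hYMx : ({p : (Fin q → ℝ) × (Fin m → ℝ) |
        p ∈ latticeSet L₁ L₂ ∧ |homNorm α M₁ M₂ p - R| ≤ δ}.ncard : ℝ)
        ≤ V/D * (Kd + Kt) * Mx := by
      have hb1 : V/D * (((q:ℝ)+2*m) * (2^(q+2*m-1) * R^(q+2*m-1)) * (3*δ))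
          = V/D * Kd * (R ^ (((q : ℝ) + 2 * m) - 1) * δ) := by
        rw [hKdd, ← hc1]; ring
      have hb2 : (V/D * C₀) * (((2:ℝ)^(q+2*m) * 2^γ₂ + 2^γ₁)
            * (R^(-γ₁) * Real.log R ^ γ₂ * R^(q+2*m)))
          = V/D * Kt * (R ^ (((q:ℝ) + 2*m) - γ₁) * Real.log R ^ γ₂) := by
        rw [hKtd, ← hc2]; ring
      have hm1 : R ^ (((q : ℝ) + 2 * m) - 1) * δ ≤ Mx := by
        rw [hMxd]; exact le_max_left _ _
      have hm2 : R ^ (((q:ℝ) + 2*m) - γ₁) * Real.log R ^ γ₂ ≤ Mx := by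
        rw [hMxd]; exact le_max_right _ _
      have hd0 : (0:ℝ) ≤ V/D * Kd := mul_nonneg (div_pos hV hD).le hKd0.le
      have ht0' : (0:ℝ) ≤ V/D * Kt := mul_nonneg (div_pos hV hD).le hKt0.le
      calc ({p : (Fin q → ℝ) × (Fin m → ℝ) |
            p ∈ latticeSet L₁ L₂ ∧ |homNorm α M₁ M₂ p - R| ≤ δ}.ncard : ℝ)
          ≤ ({k : (Fin q → ℤ) × (Fin m → ℤ) |
            |homNorm α M₁ M₂ (latticePoint L₁ L₂ k) - R| ≤ δ}.ncard : ℝ) := hYcard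
        _ ≤ V/D * (((q:ℝ)+2*m) * (2^(q+2*m-1) * R^(q+2*m-1)) * (3*δ))
            + (V/D * C₀) * (((2:ℝ)^(q+2*m) * 2^γ₂ + 2^γ₁)
                * (R^(-γ₁) * Real.log R ^ γ₂ * R^(q+2*m))) := hannR
        _ = V/D * Kd * (R ^ (((q : ℝ) + 2 * m) - 1) * δ)
            + V/D * Kt * (R ^ (((q:ℝ) + 2*m) - γ₁) * Real.log R ^ γ₂) := by rw [hb1, hb2]
        _ ≤ V/D * Kd * Mx + V/D * Kt * Mx :=
            add_le_add (mul_le_mul_of_nonneg_left hm1 hd0) (mul_le_mul_of_nonneg_left hm2 ht0')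
        _ = V/D * (Kd + Kt) * Mx := by ring
    -- X bound with T ^ Q
    have hXT : ({p : (Fin q → ℝ) × (Fin m → ℝ) |
        p ∈ latticeSet L₁ L₂ ∧ eNorm p.1 ≤ T ∧ eNorm p.2 ≤ T ^ 2}.ncard : ℝ)
        ≤ V/D * (1+KP) * c₄^(q+2*m) * T^(q+2*m) := by
      calc ({p : (Fin q → ℝ) × (Fin m → ℝ) |
            p ∈ latticeSet L₁ L₂ ∧ eNorm p.1 ≤ T ∧ eNorm p.2 ≤ T ^ 2}.ncard : ℝ)
          ≤ (latticeCount α M₁ M₂ L₁ L₂ (c₄*T) : ℝ) := hXcard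
        _ ≤ V/D * (1+KP) * (c₄*T)^(q+2*m) := hcnt3
        _ = V/D * (1+KP) * c₄^(q+2*m) * T^(q+2*m) := by rw [mul_pow]; ring
    -- final assembly
    have hTQ : (0:ℝ) < T ^ (q + 2*m) := pow_pos hT _
    rw [div_le_iff₀ hTQ]
    have hXn0 : (0:ℝ) ≤ V/D * (1+KP) * c₄^(q+2*m) * T^(q+2*m) :=
      mul_nonneg (mul_nonneg (mul_nonneg (div_pos hV hD).le (by linarith))
        (pow_nonneg hc₄0.le _)) hTQ.le
    calc (Nat.card {pp : ((Fin q → ℝ) × (Fin m → ℝ)) × ((Fin q → ℝ) × (Fin m → ℝ)) //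
          pp.1 ∈ latticeSet L₁ L₂ ∧ pp.2 ∈ latticeSet L₁ L₂ ∧
          eNorm pp.1.1 ≤ T ∧ eNorm pp.1.2 ≤ T ^ 2 ∧
          eNorm pp.2.1 ≤ T ∧ eNorm pp.2.2 ≤ T ^ 2 ∧
          |homNorm α M₁ M₂ (grpMul U (grpInv U pp.1) pp.2) - R| ≤ δ} : ℝ)
        ≤ ({p : (Fin q → ℝ) × (Fin m → ℝ) |
            p ∈ latticeSet L₁ L₂ ∧ eNorm p.1 ≤ T ∧ eNorm p.2 ≤ T ^ 2}.ncard : ℝ)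
          * ({p : (Fin q → ℝ) × (Fin m → ℝ) |
            p ∈ latticeSet L₁ L₂ ∧ |homNorm α M₁ M₂ p - R| ≤ δ}.ncard : ℝ) := hcardS
      _ ≤ (V/D * (1+KP) * c₄^(q+2*m) * T^(q+2*m)) * (V/D * (Kd + Kt) * Mx) :=
          mul_le_mul hXT hYMx (Nat.cast_nonneg _) hXn0
      _ = ((V / D) ^ 2 * (1 + KP) * c₄ ^ (q + 2 * m) * (Kd + Kt)) * Mx * T ^ (q + 2 * m) := by
          ring
      _ = (V / D) ^ 2 * (1 + KP) * c₄ ^ (q + 2 * m) * (Kd + Kt) *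
            max (R ^ (((q : ℝ) + 2 * m) - 1) * δ)
              (R ^ (((q : ℝ) + 2 * m) - γ₁) * Real.log R ^ γ₂) * T ^ (q + 2 * m) := by
          rw [hMxd]
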